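/- arXiv:2310.10969 — 4 statements merged into one kernel-verified Lean document; each statement's English description precedes it below -/
import Mathlib

section
/- The kernel of the Hodge Laplacian L_n is isomorphic to the n-th cohomology ker δ_n / im δ_{n−1} of the cochain complex. -/
open RealInnerProductSpace

/-- The kernel of the Hodge Laplacian `L = δ₁* δ₁ + δ₀ δ₀*` is
isomorphic to the cohomology `ker δ₁ / im δ₀` of the cochain complex. -/
theorem ker_hodgeLaplacian_iso_cohomology {A B C : Type*}
    [NormedAddCommGroup A] [InnerProductSpace ℝ A] [FiniteDimensional ℝ A]
    [NormedAddCommGroup B] [InnerProductSpace ℝ B] [FiniteDimensional ℝ B]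
    [NormedAddCommGroup C] [InnerProductSpace ℝ C] [FiniteDimensional ℝ C]
    (δ₀ : A →ₗ[ℝ] B) (δ₁ : B →ₗ[ℝ] C) (h : δ₁ ∘ₗ δ₀ = 0) :
    Nonempty
      ((LinearMap.ker ((LinearMap.adjoint δ₁ ∘ₗ δ₁) + (δ₀ ∘ₗ LinearMap.adjoint δ₀))) ≃ₗ[ℝ]
        (LinearMap.ker δ₁ ⧸
          (LinearMap.range δ₀).comap (LinearMap.ker δ₁).subtype)) := by
  classical
  set K : Submodule ℝ B := LinearMap.ker δ₁ with hK
  set p : Submodule ℝ K := (LinearMap.range δ₀).comap K.subtype with hp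
  -- kernel of Laplacian characterization
  have hker : ∀ x : B,
      ((LinearMap.adjoint δ₁ ∘ₗ δ₁) + (δ₀ ∘ₗ LinearMap.adjoint δ₀)) x = 0 ↔
        δ₁ x = 0 ∧ LinearMap.adjoint δ₀ x = 0 := by
    intro x
    constructor
    · intro hx
      have h0 : (0 : ℝ) = ⟪x, ((LinearMap.adjoint δ₁ ∘ₗ δ₁) + (δ₀ ∘ₗ LinearMap.adjoint δ₀)) x⟫ := by
        rw [hx, inner_zero_right]
      have h1 : (0 : ℝ) = ⟪δ₁ x, δ₁ x⟫ + ⟪LinearMap.adjoint δ₀ x, LinearMap.adjoint δ₀ x⟫ := by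
        rw [h0]
        simp only [LinearMap.add_apply, LinearMap.comp_apply, inner_add_right]
        rw [LinearMap.adjoint_inner_right, ← LinearMap.adjoint_inner_left δ₀]
      have h2 : ⟪δ₁ x, δ₁ x⟫ = 0 ∧ ⟪LinearMap.adjoint δ₀ x, LinearMap.adjoint δ₀ x⟫ = 0 := by
        constructor <;> nlinarith [real_inner_self_nonneg (x := δ₁ x),
          real_inner_self_nonneg (x := LinearMap.adjoint δ₀ x)]
      exact ⟨inner_self_eq_zero.mp h2.1, inner_self_eq_zero.mp h2.2⟩
    · rintro ⟨h1, h2⟩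
      simp [LinearMap.add_apply, LinearMap.comp_apply, h1, h2]
  -- the orthogonal complement of p inside K equals ker L (as a type)
  have hcompl : IsCompl p pᗮ := Submodule.isCompl_orthogonal_of_hasOrthogonalProjection
  refine ⟨?_ ≪≫ₗ (Submodule.quotientEquivOfIsCompl p pᗮ hcompl).symm⟩
  -- build equiv : ker L ≃ₗ pᗮ
  have hmem : ∀ x : B, x ∈ LinearMap.ker
      ((LinearMap.adjoint δ₁ ∘ₗ δ₁) + (δ₀ ∘ₗ LinearMap.adjoint δ₀)) ↔
      δ₁ x = 0 ∧ LinearMap.adjoint δ₀ x = 0 := fun x => by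
    rw [LinearMap.mem_ker]; exact hker x
  have horth : ∀ (x : K), x ∈ pᗮ ↔ LinearMap.adjoint δ₀ (x : B) = 0 := by
    intro x
    rw [Submodule.mem_orthogonal]
    constructor
    · intro hx
      have : ∀ a : A, ⟪δ₀ a, (x : B)⟫ = 0 := by
        intro a
        have haK : δ₀ a ∈ K := by
          rw [hK, LinearMap.mem_ker, ← LinearMap.comp_apply, h]; rfl
        have := hx ⟨δ₀ a, haK⟩ (by simp [hp])
        simpa [Submodule.coe_inner] using this
      have : ∀ a : A, ⟪a, LinearMap.adjoint δ₀ (x : B)⟫ = 0 := by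
        intro a
        rw [LinearMap.adjoint_inner_right]
        exact this a
      have := this (LinearMap.adjoint δ₀ (x : B))
      exact inner_self_eq_zero.mp this
    · intro hx u hu
      obtain ⟨a, ha⟩ := hu
      have : ⟪(u : B), (x : B)⟫ = 0 := by
        rw [show (u : B) = δ₀ a from ha.symm, ← LinearMap.adjoint_inner_right, hx,
          inner_zero_right]
      simpa [Submodule.coe_inner] using this
  exact { toFun := fun x => ⟨⟨(x : B), ((hmem x).mp x.2).1⟩, (horth _).mpr ((hmem x).mp x.2).2⟩,
           map_add' := fun _ _ => rfl,
           map_smul' := fun _ _ => rfl,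
           invFun := fun y =>
             ⟨(y : B), (hmem _).mpr ⟨LinearMap.mem_ker.mp (y : K).2, (horth _).mp y.2⟩⟩,
           left_inv := fun _ => rfl,
           right_inv := fun _ => rfl }
end

section
/- For the full sequence complex over vertex set V with independent-vertices weight function w, the n-dimensional Hodge Laplacian acts on a basis element e_σ (σ of length n+1) by L_n(e_σ) = [(n+2) − Σ_{i=0}^n w(σ_i)]·e_σ − Σ w(σ_j)·e_τ, where the sum ranges over sequences τ differing from σ in exactly one position j. -/
/-- Sequence-complex incidence function `κ(σ,τ) = Σ_{i : remove(σ,i)=τ} (-1)^i`. -/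
noncomputable def seqKappa {V : Type*} [DecidableEq V] {n : ℕ}
    (σ : Fin (n + 1) → V) (τ : Fin n → V) : ℝ :=
  ∑ i : Fin (n + 1), if i.removeNth σ = τ then (-1 : ℝ) ^ (i : ℕ) else 0

/-- Independent-vertices weight of a sequence: `w(σ) = ∏_i w(σ_i)`. -/
noncomputable def seqWeight {V : Type*} (w : V → ℝ) {k : ℕ} (σ : Fin k → V) : ℝ :=
  ∏ i, w (σ i)

/-- The coboundary `δ` from cochains on length-`k` sequences to cochains on
length-`k+1` sequences: `(δ g)(σ) = Σ_τ κ(σ,τ) g(τ)`. -/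
noncomputable def seqCoboundary (V : Type*) [Fintype V] [DecidableEq V] (k : ℕ) :
    ((Fin k → V) → ℝ) →ₗ[ℝ] ((Fin (k + 1) → V) → ℝ) :=
  Matrix.toLin' (fun (σ : Fin (k + 1) → V) (τ : Fin k → V) => seqKappa σ τ)

/-- The adjoint coboundary with respect to the weighted inner product
`⟨e_σ, e_σ⟩ = w(σ)`: `δ* e_σ = Σ_τ (w(σ)/w(τ)) κ(σ,τ) e_τ`. -/
noncomputable def seqCoboundaryAdj {V : Type*} [Fintype V] [DecidableEq V]
    (w : V → ℝ) (k : ℕ) : ((Fin (k + 1) → V) → ℝ) →ₗ[ℝ] ((Fin k → V) → ℝ) :=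
  Matrix.toLin' (fun (τ : Fin k → V) (σ : Fin (k + 1) → V) =>
    (seqWeight w σ / seqWeight w τ) * seqKappa σ τ)

/-- The Hodge Laplacian `L_n = δ_n* δ_n + δ_{n-1} δ_{n-1}*` on cochains of degree `n`
(functions on sequences of length `n+1`) of the full sequence complex. -/
noncomputable def seqLaplacian {V : Type*} [Fintype V] [DecidableEq V]
    (w : V → ℝ) (n : ℕ) : ((Fin (n + 1) → V) → ℝ) →ₗ[ℝ] ((Fin (n + 1) → V) → ℝ) :=
  seqCoboundaryAdj w (n + 1) ∘ₗ seqCoboundary V (n + 1) +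
    seqCoboundary V n ∘ₗ seqCoboundaryAdj w n

open Fin Finset

lemma succAbove_comm_aux {n : ℕ} (k l : Fin (n + 1)) (h : k ≤ l) (m : Fin n) :
    (k.castSucc).succAbove (l.succAbove m) = (l.succ).succAbove (k.succAbove m) := by
  have hm := m.isLt; have hk := k.isLt; have hl := l.isLt
  simp only [Fin.succAbove]
  split_ifs <;>
    simp_all only [Fin.lt_def, Fin.le_def, Fin.ext_iff, Fin.coe_castSucc, Fin.val_succ,
      not_true_eq_false, not_false_eq_true] <;> omega

lemma removeNth_insertNth_of_le {V : Type*} {n : ℕ} (k l : Fin (n + 1)) (h : k ≤ l)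
    (y : V) (σ : Fin (n + 1) → V) :
    Fin.removeNth (α := fun _ => V) k.castSucc ((l.succ).insertNth y σ)
      = l.insertNth y (k.removeNth σ) := by
  rw [eq_comm, Fin.insertNth_eq_iff]
  constructor
  · simp only [Fin.removeNth]
    rw [Fin.succAbove_castSucc_of_le k l h, Fin.insertNth_apply_same]
  · funext m
    simp only [Fin.removeNth]
    rw [succAbove_comm_aux k l h m, Fin.insertNth_apply_succAbove]

lemma removeNth_insertNth_of_ge {V : Type*} {n : ℕ} (k l : Fin (n + 1)) (h : l ≤ k)
    (y : V) (σ : Fin (n + 1) → V) :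
    Fin.removeNth (α := fun _ => V) k.succ ((l.castSucc).insertNth y σ)
      = l.insertNth y (k.removeNth σ) := by
  rw [eq_comm, Fin.insertNth_eq_iff]
  constructor
  · simp only [Fin.removeNth]
    rw [Fin.succAbove_succ_of_le k l h, Fin.insertNth_apply_same]
  · funext m
    simp only [Fin.removeNth]
    rw [← succAbove_comm_aux l k h m, Fin.insertNth_apply_succAbove]

lemma seqWeight_pos {V : Type*} [Fintype V] (w : V → ℝ) (hw : ∀ v, 0 < w v) {k : ℕ}
    (σ : Fin k → V) : 0 < seqWeight w σ :=
  Finset.prod_pos fun _ _ => hw _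

lemma seqWeight_removeNth {V : Type*} (w : V → ℝ) {k : ℕ} (p : Fin (k + 1))
    (σ : Fin (k + 1) → V) :
    seqWeight w σ = w (σ p) * seqWeight w (p.removeNth σ) := by
  rw [seqWeight, Fin.prod_univ_succAbove (fun i => w (σ i)) p]; rfl

lemma seqWeight_insertNth {V : Type*} (w : V → ℝ) {k : ℕ} (p : Fin (k + 1)) (y : V)
    (σ : Fin k → V) : seqWeight w (p.insertNth y σ) = w y * seqWeight w σ := by
  rw [seqWeight_removeNth w p, Fin.insertNth_apply_same, Fin.removeNth_insertNth]

lemma lemA {V : Type*} [Fintype V] [DecidableEq V] (w : V → ℝ) (hw_pos : ∀ v, 0 < w v)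
    (hw_sum : ∑ v, w v = 1) {n : ℕ} (σ ρ : Fin (n + 1) → V) :
    ∑ ρ' : Fin (n + 2) → V,
        (seqWeight w ρ' / seqWeight w ρ * seqKappa ρ' ρ) * seqKappa ρ' σ
    = (n + 2 : ℝ) * (if ρ = σ then 1 else 0)
      - (∑ l : Fin (n + 1), ∑ k : Fin (n + 1),
          (-1 : ℝ) ^ (l : ℕ) * (-1) ^ (k : ℕ) * w (σ k) *
            (if l.removeNth ρ = k.removeNth σ then 1 else 0))
      - ∑ k : Fin (n + 1), w (σ k) * (if k.removeNth ρ = k.removeNth σ then 1 else 0) := by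
  classical
  -- Step 1: expand the κ(ρ',σ) factor
  have e1 : ∀ ρ' : Fin (n + 2) → V,
      (seqWeight w ρ' / seqWeight w ρ * seqKappa ρ' ρ) * seqKappa ρ' σ
      = ∑ j : Fin (n + 2), (if j.removeNth ρ' = σ then
          (seqWeight w ρ' / seqWeight w ρ * seqKappa ρ' ρ) * (-1 : ℝ) ^ (j : ℕ) else 0) := by
    intro ρ'
    set a := seqWeight w ρ' / seqWeight w ρ * seqKappa ρ' ρ with ha
    simp only [seqKappa]
    rw [Finset.mul_sum]
    exact Finset.sum_congr rfl fun j _ => by split_ifs <;> ring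
  rw [Finset.sum_congr rfl fun ρ' _ => e1 ρ', Finset.sum_comm]
  -- Step 2: reindex ρ' ↦ insertNth j y σ
  have e2 : ∀ j : Fin (n + 2),
      (∑ ρ' : Fin (n + 2) → V, if j.removeNth ρ' = σ then
          (seqWeight w ρ' / seqWeight w ρ * seqKappa ρ' ρ) * (-1 : ℝ) ^ (j : ℕ) else 0)
      = ∑ y : V, (seqWeight w (j.insertNth y σ) / seqWeight w ρ
          * seqKappa (j.insertNth y σ) ρ) * (-1 : ℝ) ^ (j : ℕ) := by
    intro j
    rw [← Equiv.sum_comp (Fin.insertNthEquiv (fun _ => V) j)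
        (fun ρ' => if j.removeNth ρ' = σ then
          (seqWeight w ρ' / seqWeight w ρ * seqKappa ρ' ρ) * (-1 : ℝ) ^ (j : ℕ) else 0)]
    rw [Fintype.sum_prod_type]
    simp only [Fin.insertNthEquiv, Equiv.coe_fn_mk, Fin.removeNth_insertNth,
      Finset.sum_ite_eq', Finset.mem_univ, if_true]
  rw [Finset.sum_congr rfl fun j _ => e2 j]
  -- Step 3: expand κ(insertNth j y σ, ρ) splitting off the index j
  have e3 : ∀ (j : Fin (n + 2)) (y : V),
      (seqWeight w (j.insertNth y σ) / seqWeight w ρ * seqKappa (j.insertNth y σ) ρ)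
          * (-1 : ℝ) ^ (j : ℕ)
      = (w y * seqWeight w σ / seqWeight w ρ) * (if σ = ρ then (-1 : ℝ) ^ (j : ℕ) else 0)
            * (-1 : ℝ) ^ (j : ℕ)
        + ∑ k : Fin (n + 1), (w y * seqWeight w σ / seqWeight w ρ) *
            (if Fin.removeNth (α := fun _ => V) (j.succAbove k) (j.insertNth y σ) = ρ
              then (-1 : ℝ) ^ ((j.succAbove k : Fin (n + 2)) : ℕ) else 0)
            * (-1 : ℝ) ^ (j : ℕ) := by
    intro j y
    rw [seqWeight_insertNth]
    have hk : seqKappa (j.insertNth y σ) ρ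
        = (if σ = ρ then (-1 : ℝ) ^ (j : ℕ) else 0)
          + ∑ k : Fin (n + 1), (if Fin.removeNth (α := fun _ => V) (j.succAbove k) (j.insertNth y σ) = ρ
              then (-1 : ℝ) ^ ((j.succAbove k : Fin (n + 2)) : ℕ) else 0) := by
      simp only [seqKappa]
      rw [Fin.sum_univ_succAbove
        (fun i => if Fin.removeNth (α := fun _ => V) i (j.insertNth y σ) = ρ
          then (-1 : ℝ) ^ (i : ℕ) else 0) j,
        Fin.removeNth_insertNth]
    rw [hk, mul_add, add_mul, Finset.mul_sum, Finset.sum_mul]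
  rw [Finset.sum_congr rfl fun j _ => Finset.sum_congr rfl fun y _ => e3 j y]
  simp only [Finset.sum_add_distrib]
  -- Diagonal part
  have hD1 : (∑ j : Fin (n + 2), ∑ y : V,
      (w y * seqWeight w σ / seqWeight w ρ) * (if σ = ρ then (-1 : ℝ) ^ (j : ℕ) else 0)
        * (-1 : ℝ) ^ (j : ℕ))
      = (n + 2 : ℝ) * (if ρ = σ then 1 else 0) := by
    by_cases h : σ = ρ
    · subst h
      have hone : ∀ j : Fin (n + 2), ∑ y : V,
          (w y * seqWeight w σ / seqWeight w σ) * (if σ = σ then (-1 : ℝ) ^ (j : ℕ) else 0)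
            * (-1 : ℝ) ^ (j : ℕ) = 1 := by
        intro j
        have h1 : ((-1 : ℝ) ^ (j : ℕ)) * (-1) ^ (j : ℕ) = 1 := by
          rw [← pow_add]; exact Even.neg_one_pow ⟨(j : ℕ), rfl⟩
        have h2 : seqWeight w σ / seqWeight w σ = 1 :=
          div_self (ne_of_gt (seqWeight_pos w hw_pos σ))
        calc ∑ y : V, (w y * seqWeight w σ / seqWeight w σ)
                * (if σ = σ then (-1 : ℝ) ^ (j : ℕ) else 0) * (-1 : ℝ) ^ (j : ℕ)
            = ∑ y : V, w y := by
              refine Finset.sum_congr rfl fun y _ => ?_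
              rw [if_pos rfl, mul_div_assoc, h2, mul_one, mul_assoc, h1, mul_one]
          _ = 1 := hw_sum
      rw [Finset.sum_congr rfl fun j _ => hone j, Finset.sum_const, Finset.card_univ,
        Fintype.card_fin, if_pos rfl, mul_one, nsmul_eq_mul, mul_one]
      push_cast
      ring
    · simp [h, Ne.symm h]
  rw [hD1]
  -- Cross part
  rw [Finset.sum_congr rfl fun j _ => Finset.sum_comm]
  have hq : ∀ (j : Fin (n + 2)) (k : Fin (n + 1)),
      (∑ y : V, (w y * seqWeight w σ / seqWeight w ρ) *
          (if Fin.removeNth (α := fun _ => V) (j.succAbove k) (j.insertNth y σ) = ρ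
            then (-1 : ℝ) ^ ((j.succAbove k : Fin (n + 2)) : ℕ) else 0)
          * (-1 : ℝ) ^ (j : ℕ))
      = -((-1 : ℝ) ^ ((k.predAbove j : Fin (n + 1)) : ℕ) * (-1) ^ (k : ℕ) * w (σ k) *
          (if (k.predAbove j).removeNth ρ = k.removeNth σ then 1 else 0)) := by
    intro j k
    rcases lt_or_ge (castSucc k) j with hlt | hle
    · have hj0 : j ≠ 0 := by
        intro h; rw [h] at hlt; exact absurd hlt (Fin.not_lt_zero _)
      obtain ⟨l, rfl⟩ : ∃ l, j = l.succ := ⟨j.pred hj0, (Fin.succ_pred j hj0).symm⟩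
      have hkl : k ≤ l := by rwa [Fin.castSucc_lt_succ_iff] at hlt
      simp only [Fin.succAbove_succ_of_le l k hkl, removeNth_insertNth_of_le k l hkl,
        Fin.predAbove_succ_of_le k l hkl, Fin.coe_castSucc, Fin.val_succ,
        Fin.insertNth_eq_iff]
      by_cases hX : k.removeNth σ = l.removeNth ρ
      · have h1 : seqWeight w σ = w (σ k) * seqWeight w (l.removeNth ρ) := by
          rw [seqWeight_removeNth w k σ, hX]
        have h2 : seqWeight w ρ = w (ρ l) * seqWeight w (l.removeNth ρ) :=
          seqWeight_removeNth w l ρ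
        simp only [hX, and_true, eq_self_iff_true, if_true, mul_ite, mul_zero, ite_mul,
          zero_mul, Finset.sum_ite_eq', Finset.mem_univ]
        rw [h1, h2]
        have hw1 : w (ρ l) ≠ 0 := ne_of_gt (hw_pos _)
        have hw2 : seqWeight w (l.removeNth ρ) ≠ 0 := ne_of_gt (seqWeight_pos w hw_pos _)
        have hw3 : w (ρ l) * seqWeight w (l.removeNth ρ) ≠ 0 := mul_ne_zero hw1 hw2
        field_simp
        ring
      · have hX' : ¬(l.removeNth ρ = k.removeNth σ) := fun h => hX h.symm
        simp [hX, hX']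
    · have hjlast : j ≠ Fin.last (n + 1) := by
        intro h; rw [h] at hle
        exact absurd hle (not_le.mpr (Fin.castSucc_lt_last k))
      obtain ⟨l, rfl⟩ : ∃ l, j = l.castSucc :=
        ⟨j.castPred hjlast, (Fin.castSucc_castPred j hjlast).symm⟩
      have hlk : l ≤ k := by rwa [Fin.castSucc_le_castSucc_iff] at hle
      simp only [Fin.succAbove_castSucc_of_le l k hlk, removeNth_insertNth_of_ge k l hlk,
        Fin.predAbove_castSucc_of_le k l hlk, Fin.coe_castSucc, Fin.val_succ,
        Fin.insertNth_eq_iff]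
      by_cases hX : k.removeNth σ = l.removeNth ρ
      · have h1 : seqWeight w σ = w (σ k) * seqWeight w (l.removeNth ρ) := by
          rw [seqWeight_removeNth w k σ, hX]
        have h2 : seqWeight w ρ = w (ρ l) * seqWeight w (l.removeNth ρ) :=
          seqWeight_removeNth w l ρ
        simp only [hX, and_true, eq_self_iff_true, if_true, mul_ite, mul_zero, ite_mul,
          zero_mul, Finset.sum_ite_eq', Finset.mem_univ]
        rw [h1, h2]
        have hw1 : w (ρ l) ≠ 0 := ne_of_gt (hw_pos _)
        have hw2 : seqWeight w (l.removeNth ρ) ≠ 0 := ne_of_gt (seqWeight_pos w hw_pos _)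
        field_simp
        ring
      · have hX' : ¬(l.removeNth ρ = k.removeNth σ) := fun h => hX h.symm
        simp [hX, hX']
  rw [Finset.sum_congr rfl fun j _ => Finset.sum_congr rfl fun k _ => hq j k,
    Finset.sum_comm]
  -- Collapse the j-sum using the fibers of predAbove
  have hfib : ∀ k : Fin (n + 1),
      (∑ j : Fin (n + 2),
        -((-1 : ℝ) ^ ((k.predAbove j : Fin (n + 1)) : ℕ) * (-1) ^ (k : ℕ) * w (σ k) *
          (if (k.predAbove j).removeNth ρ = k.removeNth σ then 1 else 0)))
      = -((∑ l : Fin (n + 1), (-1 : ℝ) ^ (l : ℕ) * (-1) ^ (k : ℕ) * w (σ k) *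
            (if l.removeNth ρ = k.removeNth σ then 1 else 0))
          + w (σ k) * (if k.removeNth ρ = k.removeNth σ then 1 else 0)) := by
    intro k
    rw [Fin.sum_univ_succAbove
      (fun j => -((-1 : ℝ) ^ ((k.predAbove j : Fin (n + 1)) : ℕ) * (-1) ^ (k : ℕ) * w (σ k) *
        (if (k.predAbove j).removeNth ρ = k.removeNth σ then 1 else 0))) (castSucc k)]
    simp only [Fin.predAbove_castSucc_self, Fin.predAbove_succAbove]
    have h1 : ((-1 : ℝ) ^ (k : ℕ)) * (-1) ^ (k : ℕ) = 1 := by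
      rw [← pow_add]; exact Even.neg_one_pow ⟨(k : ℕ), rfl⟩
    rw [Finset.sum_neg_distrib]
    rw [h1, one_mul]
    ring
  rw [Finset.sum_congr rfl fun k _ => hfib k]
  rw [Finset.sum_neg_distrib, Finset.sum_add_distrib]
  rw [Finset.sum_comm (f := fun (k l : Fin (n + 1)) => (-1 : ℝ) ^ (l : ℕ) * (-1) ^ (k : ℕ) * w (σ k) *
    (if l.removeNth ρ = k.removeNth σ then 1 else 0))]
  ring


lemma lemB {V : Type*} [Fintype V] [DecidableEq V] (w : V → ℝ) (hw_pos : ∀ v, 0 < w v)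
    {n : ℕ} (σ ρ : Fin (n + 1) → V) :
    ∑ τ : Fin n → V, seqKappa ρ τ * (seqWeight w σ / seqWeight w τ * seqKappa σ τ)
      = ∑ l : Fin (n + 1), ∑ k : Fin (n + 1),
          (-1 : ℝ) ^ (l : ℕ) * (-1) ^ (k : ℕ) * w (σ k) *
            (if l.removeNth ρ = k.removeNth σ then 1 else 0) := by
  have hstep : ∀ τ : Fin n → V,
      seqKappa ρ τ * (seqWeight w σ / seqWeight w τ * seqKappa σ τ)
      = ∑ k : Fin (n + 1), (if k.removeNth σ = τ then
          seqKappa ρ τ * (seqWeight w σ / seqWeight w τ * (-1) ^ (k : ℕ)) else 0) := by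
    intro τ
    set a := seqKappa ρ τ with ha
    simp only [seqKappa]
    rw [Finset.mul_sum, Finset.mul_sum]
    exact Finset.sum_congr rfl fun k _ => by split_ifs <;> ring
  rw [Finset.sum_congr rfl fun τ _ => hstep τ, Finset.sum_comm]
  simp only [Finset.sum_ite_eq, Finset.mem_univ, if_true]
  have hc : ∀ k : Fin (n + 1), seqWeight w σ / seqWeight w (k.removeNth σ) = w (σ k) :=
    fun k => by
      rw [seqWeight_removeNth w k σ, mul_div_assoc,
        div_self (ne_of_gt (seqWeight_pos w hw_pos _)), mul_one]
  have h2 : ∀ k : Fin (n + 1),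
      seqKappa ρ (k.removeNth σ) * (seqWeight w σ / seqWeight w (k.removeNth σ) * (-1) ^ (k : ℕ))
      = ∑ l : Fin (n + 1), (-1 : ℝ) ^ (l : ℕ) * (-1) ^ (k : ℕ) * w (σ k) *
          (if l.removeNth ρ = k.removeNth σ then 1 else 0) := by
    intro k
    rw [hc k]
    simp only [seqKappa]
    rw [Finset.sum_mul]
    exact Finset.sum_congr rfl fun l _ => by split_ifs <;> ring
  rw [Finset.sum_congr rfl fun k _ => h2 k]
  exact Finset.sum_comm

lemma lemC {V : Type*} [Fintype V] [DecidableEq V] (w : V → ℝ) {n : ℕ}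
    (σ ρ : Fin (n + 1) → V) :
    ((n + 2 : ℝ) - ∑ i, w (σ i)) * (if ρ = σ then 1 else 0)
      - ∑ j : Fin (n + 1), ∑ y ∈ Finset.univ.erase (σ j),
          w (σ j) * (if ρ = Function.update σ j y then 1 else 0)
    = (n + 2 : ℝ) * (if ρ = σ then 1 else 0)
      - ∑ k : Fin (n + 1), w (σ k) * (if k.removeNth ρ = k.removeNth σ then 1 else 0) := by
  have key : ∀ k : Fin (n + 1),
      w (σ k) * (if k.removeNth ρ = k.removeNth σ then (1 : ℝ) else 0)
      = w (σ k) * (if ρ = σ then 1 else 0)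
        + ∑ y ∈ Finset.univ.erase (σ k),
            w (σ k) * (if ρ = Function.update σ k y then 1 else 0) := by
    intro k
    by_cases h1 : k.removeNth ρ = k.removeNth σ
    · by_cases h2 : ρ = σ
      · subst h2
        have hz : ∀ y ∈ Finset.univ.erase (ρ k),
            w (ρ k) * (if ρ = Function.update ρ k y then (1 : ℝ) else 0) = 0 := by
          intro y hy
          rw [if_neg, mul_zero]
          intro hc
          have hck := congrFun hc k
          rw [Function.update_self] at hck
          exact (Finset.mem_erase.mp hy).1 hck.symm
        rw [Finset.sum_eq_zero hz, add_zero, if_pos rfl, if_pos rfl]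
      · have hρ : ρ = Function.update σ k (ρ k) := by
          calc ρ = k.insertNth (ρ k) (k.removeNth ρ) := (Fin.insertNth_self_removeNth k ρ).symm
            _ = k.insertNth (ρ k) (k.removeNth σ) := by rw [h1]
            _ = Function.update σ k (ρ k) := Fin.insertNth_removeNth k _ σ
        have hyne : ρ k ≠ σ k := by
          intro hc
          apply h2
          rw [hρ, hc, Function.update_eq_self]
        have hsum : ∑ y ∈ Finset.univ.erase (σ k),
            w (σ k) * (if ρ = Function.update σ k y then (1 : ℝ) else 0) = w (σ k) := by
          rw [Finset.sum_eq_single_of_mem (ρ k)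
            (Finset.mem_erase.mpr ⟨hyne, Finset.mem_univ _⟩)]
          · rw [if_pos hρ, mul_one]
          · intro y _ hy
            rw [if_neg, mul_zero]
            intro hc
            apply hy
            have hck := congrFun (hρ.symm.trans hc) k
            rw [Function.update_self, Function.update_self] at hck
            exact hck.symm
        rw [hsum, if_pos h1, if_neg h2, mul_one, mul_zero, zero_add]
    · have h2 : ρ ≠ σ := fun e => h1 (by rw [e])
      have hz : ∀ y ∈ Finset.univ.erase (σ k),
          w (σ k) * (if ρ = Function.update σ k y then (1 : ℝ) else 0) = 0 := by
        intro y _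
        rw [if_neg, mul_zero]
        intro hc
        apply h1
        rw [hc, Fin.removeNth_update]
      rw [Finset.sum_eq_zero hz, add_zero, if_neg h1, if_neg h2]
  have hsplit : ∑ k : Fin (n + 1), w (σ k) * (if k.removeNth ρ = k.removeNth σ then (1 : ℝ) else 0)
      = (∑ k : Fin (n + 1), w (σ k) * (if ρ = σ then 1 else 0))
        + ∑ j : Fin (n + 1), ∑ y ∈ Finset.univ.erase (σ j),
            w (σ j) * (if ρ = Function.update σ j y then 1 else 0) := by
    rw [← Finset.sum_add_distrib]
    exact Finset.sum_congr rfl fun k _ => key k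
  rw [hsplit, ← Finset.sum_mul]
  ring

/-- For the full sequence complex over `V` with independent-vertices
weights, `L_n(e_σ) = [(n+2) − Σ_i w(σ_i)]·e_σ − Σ_{τ ⋈ σ at position j} w(σ_j)·e_τ`,
the last sum ranging over sequences differing from `σ` in exactly one position. -/
theorem seqLaplacian_indep_apply {V : Type*} [Fintype V] [DecidableEq V]
    (w : V → ℝ) (hw_pos : ∀ v, 0 < w v) (hw_sum : ∑ v, w v = 1) (n : ℕ)
    (σ : Fin (n + 1) → V) :
    seqLaplacian w n (fun τ => if τ = σ then (1 : ℝ) else 0) =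
      ((n + 2 : ℝ) - ∑ i, w (σ i)) • (fun τ => if τ = σ then (1 : ℝ) else 0) -
        ∑ j : Fin (n + 1), ∑ y ∈ Finset.univ.erase (σ j),
          w (σ j) • (fun τ => if τ = Function.update σ j y then (1 : ℝ) else 0) := by
  classical
  funext ρ
  have hL : seqLaplacian w n (fun τ => if τ = σ then (1 : ℝ) else 0) ρ
      = (∑ ρ' : Fin (n + 2) → V,
            (seqWeight w ρ' / seqWeight w ρ * seqKappa ρ' ρ) * seqKappa ρ' σ)
        + ∑ τ : Fin n → V, seqKappa ρ τ * (seqWeight w σ / seqWeight w τ * seqKappa σ τ) := by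
    simp only [seqLaplacian, LinearMap.add_apply, Pi.add_apply, LinearMap.coe_comp, Function.comp_apply,
      seqCoboundary, seqCoboundaryAdj, Matrix.toLin'_apply, Matrix.mulVec, dotProduct,
      mul_ite, mul_one, mul_zero, Finset.sum_ite_eq', Finset.mem_univ, if_true]
    erw [Matrix.toLin'_apply, Matrix.toLin'_apply, Matrix.toLin'_apply, Matrix.toLin'_apply]
    simp only [Matrix.mulVec, dotProduct,
      mul_ite, mul_one, mul_zero, Finset.sum_ite_eq', Finset.mem_univ, if_true]
  rw [hL, lemA w hw_pos hw_sum σ ρ, lemB w hw_pos σ ρ]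
  simp only [Pi.sub_apply, Pi.smul_apply, Finset.sum_apply, smul_eq_mul]
  rw [lemC w σ ρ]
  ring
end

section
/- Fix a vertex a and i ∈ {0,...,n} and x ≠ a. Then the cochain Σ_{σ: σ_i = a} w_x · e_σ − Σ_{τ: τ_i = x} w_a · e_τ is an eigenvector of the independent-vertices-model Hodge Laplacian L_n on the full sequence complex with eigenvalue 2. -/
namespace Seq14

lemma val_succAbove {n : ℕ} (p : Fin (n+1)) (i : Fin n) :
    (p.succAbove i : ℕ) = if (i:ℕ) < (p:ℕ) then (i:ℕ) else (i:ℕ)+1 := by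
  rw [Fin.succAbove]
  split_ifs with h1 h2 h2 <;> simp_all [Fin.lt_def] <;> omega

lemma val_predAbove {n : ℕ} (p : Fin n) (i : Fin (n+1)) :
    (p.predAbove i : ℕ) = if (p:ℕ) < (i:ℕ) then (i:ℕ) - 1 else (i:ℕ) := by
  rw [Fin.predAbove]
  split_ifs with h1 h2 h2
  · rw [Fin.coe_pred]
  · exact absurd (Fin.lt_def.mp h1) (by simpa [Fin.lt_def] using h2)
  · exact absurd (Fin.lt_def.mpr (by simpa using h2)) h1
  · rw [Fin.coe_castPred]

lemma I1 {n : ℕ} (j : Fin (n+2)) (m : Fin (n+1)) :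
    (j.succAbove m).succAbove (m.predAbove j) = j := by
  have hm := m.isLt; have hj := j.isLt
  apply Fin.ext
  simp only [val_succAbove, val_predAbove]
  split_ifs <;> omega

lemma I2 {n : ℕ} (j : Fin (n+2)) (m : Fin (n+1)) (s : Fin n) :
    (j.succAbove m).succAbove ((m.predAbove j).succAbove s) = j.succAbove (m.succAbove s) := by
  have hm := m.isLt; have hj := j.isLt; have hs := s.isLt
  apply Fin.ext
  simp only [val_succAbove, val_predAbove]
  split_ifs <;> omega

lemma exp_parity {n : ℕ} (j : Fin (n+2)) (m : Fin (n+1)) :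
    (j:ℕ) + (j.succAbove m : ℕ) = ((m.predAbove j : ℕ) + (m:ℕ)) + 1 := by
  have hm := m.isLt; have hj := j.isLt
  simp only [val_succAbove, val_predAbove]
  split_ifs <;> omega

lemma removeNth_insertNth_succAbove {α : Type*} {n : ℕ} (j : Fin (n+2)) (m : Fin (n+1))
    (v : α) (σ : Fin (n+1) → α) :
    Fin.removeNth (j.succAbove m) (Fin.insertNth (α := fun _ => α) j v σ) =
      Fin.insertNth (α := fun _ => α) (m.predAbove j) v (Fin.removeNth m σ) := by
  funext t
  rcases eq_or_ne t (m.predAbove j) with rfl | ht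
  · show Fin.insertNth (α := fun _ => α) j v σ ((j.succAbove m).succAbove (m.predAbove j)) = _
    rw [I1, Fin.insertNth_apply_same, Fin.insertNth_apply_same]
  · obtain ⟨s, rfl⟩ := Fin.exists_succAbove_eq ht
    show Fin.insertNth (α := fun _ => α) j v σ
      ((j.succAbove m).succAbove ((m.predAbove j).succAbove s)) = _
    rw [I2]
    rw [Fin.insertNth_apply_succAbove (α := fun _ => α) j v σ (m.succAbove s)]
    rw [Fin.insertNth_apply_succAbove (α := fun _ => α) (m.predAbove j) v (Fin.removeNth m σ) s]
    rfl

lemma sum_predAbove {M : Type*} [AddCommMonoid M] {n : ℕ} (m : Fin (n+1)) (H : Fin (n+1) → M) :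
    ∑ j : Fin (n+2), H (m.predAbove j) = H m + ∑ p : Fin (n+1), H p := by
  rw [Fin.sum_univ_succAbove (fun j => H (m.predAbove j)) m.castSucc]
  simp [Fin.predAbove_succAbove]

variable {V : Type*} [Fintype V] [DecidableEq V]

lemma seqCoboundary_apply (k : ℕ) (g : (Fin k → V) → ℝ) (σ : Fin (k+1) → V) :
    seqCoboundary V k g σ = ∑ j : Fin (k+1), (-1:ℝ)^(j:ℕ) * g (j.removeNth σ) := by
  show ∑ τ, seqKappa σ τ * g τ = _
  calc ∑ τ, seqKappa σ τ * g τ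
      = ∑ τ, ∑ j : Fin (k+1), (if j.removeNth σ = τ then (-1:ℝ)^(j:ℕ) * g τ else 0) := by
        refine Finset.sum_congr rfl fun τ _ => ?_
        rw [seqKappa, Finset.sum_mul]
        refine Finset.sum_congr rfl fun j _ => ?_
        split_ifs <;> simp
    _ = ∑ j : Fin (k+1), ∑ τ, (if j.removeNth σ = τ then (-1:ℝ)^(j:ℕ) * g τ else 0) :=
        Finset.sum_comm
    _ = ∑ j : Fin (k+1), (-1:ℝ)^(j:ℕ) * g (j.removeNth σ) := by
        refine Finset.sum_congr rfl fun j _ => ?_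
        rw [Finset.sum_ite_eq]
        simp

lemma seqWeight_pos (w : V → ℝ) (hw : ∀ v, 0 < w v) {k : ℕ} (τ : Fin k → V) :
    0 < seqWeight w τ := Finset.prod_pos fun i _ => hw _

lemma seqWeight_insertNth (w : V → ℝ) {k : ℕ} (j : Fin (k+1)) (v : V) (τ : Fin k → V) :
    seqWeight w (Fin.insertNth (α := fun _ => V) j v τ) = w v * seqWeight w τ := by
  unfold seqWeight
  rw [Fin.prod_univ_succAbove (fun t => w (Fin.insertNth (α := fun _ => V) j v τ t)) j]
  simp

lemma seqCoboundaryAdj_apply (w : V → ℝ) (hw : ∀ v, 0 < w v) (k : ℕ)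
    (g : (Fin (k+1) → V) → ℝ) (τ : Fin k → V) :
    seqCoboundaryAdj w k g τ =
      ∑ j : Fin (k+1), (-1:ℝ)^(j:ℕ) * ∑ v, w v * g (j.insertNth v τ) := by
  show ∑ σ, (seqWeight w σ / seqWeight w τ * seqKappa σ τ) * g σ = _
  calc ∑ σ, (seqWeight w σ / seqWeight w τ * seqKappa σ τ) * g σ
      = ∑ σ, ∑ j : Fin (k+1),
          (if j.removeNth σ = τ then (-1:ℝ)^(j:ℕ) * (seqWeight w σ / seqWeight w τ * g σ)
           else 0) := by
        refine Finset.sum_congr rfl fun σ _ => ?_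
        rw [seqKappa, Finset.mul_sum, Finset.sum_mul]
        refine Finset.sum_congr rfl fun j _ => ?_
        split_ifs <;> ring
    _ = ∑ j : Fin (k+1), ∑ σ,
          (if j.removeNth σ = τ then (-1:ℝ)^(j:ℕ) * (seqWeight w σ / seqWeight w τ * g σ)
           else 0) := Finset.sum_comm
    _ = ∑ j : Fin (k+1), (-1:ℝ)^(j:ℕ) * ∑ v, w v * g (j.insertNth v τ) := by
        refine Finset.sum_congr rfl fun j _ => ?_
        rw [← Equiv.sum_comp (Fin.insertNthEquiv (fun _ => V) j)
          (fun σ => if j.removeNth σ = τ then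
            (-1:ℝ)^(j:ℕ) * (seqWeight w σ / seqWeight w τ * g σ) else 0)]
        rw [Fintype.sum_prod_type]
        rw [Finset.mul_sum]
        refine Finset.sum_congr rfl fun v _ => ?_
        have h0 : ∀ ρ : Fin k → V,
            ((Fin.insertNthEquiv (fun _ => V) j) (v, ρ)) = j.insertNth v ρ := fun _ => rfl
        simp only [h0, Fin.removeNth_insertNth]
        rw [Finset.sum_ite_eq' Finset.univ τ]
        simp only [Finset.mem_univ, if_true]
        rw [seqWeight_insertNth w j v τ, mul_div_assoc,
          div_self (ne_of_gt (seqWeight_pos w hw τ))]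
        ring

lemma seqLaplacian_apply (w : V → ℝ) (hw : ∀ v, 0 < w v) (hw_sum : ∑ v, w v = 1) (n : ℕ)
    (f : (Fin (n+1) → V) → ℝ) (σ : Fin (n+1) → V) :
    seqLaplacian w n f σ =
      ((n:ℝ) + 2) * f σ - ∑ m : Fin (n+1), ∑ v, w v * f (Function.update σ m v) := by
  set G : Fin (n+1) → Fin (n+1) → ℝ :=
    fun p m => ∑ v, w v * f (Fin.insertNth p v (Fin.removeNth m σ)) with hGdef
  have hsign : ∀ (j : Fin (n+2)) (m : Fin (n+1)),
      (-1:ℝ)^(j:ℕ) * (-1:ℝ)^((j.succAbove m : ℕ)) =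
        -((-1:ℝ)^((m.predAbove j : ℕ) + (m:ℕ))) := by
    intro j m
    rw [← pow_add, exp_parity j m, pow_succ]
    ring
  -- the "up-down" term
  have hA : seqCoboundaryAdj w (n+1) (seqCoboundary V (n+1) f) σ =
      ((n:ℝ) + 2) * f σ -
        ∑ m : Fin (n+1), (((-1:ℝ)^((m:ℕ)+(m:ℕ)) * G m m) +
          ∑ p : Fin (n+1), (-1:ℝ)^((p:ℕ)+(m:ℕ)) * G p m) := by
    rw [seqCoboundaryAdj_apply w hw (n+1)]
    have step : ∀ (j : Fin (n+2)) (v : V),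
        seqCoboundary V (n+1) f (j.insertNth v σ) =
          (-1:ℝ)^(j:ℕ) * f σ +
          ∑ m : Fin (n+1), (-1:ℝ)^((j.succAbove m : ℕ)) *
            f (Fin.insertNth (m.predAbove j) v (Fin.removeNth m σ)) := by
      intro j v
      rw [seqCoboundary_apply]
      rw [Fin.sum_univ_succAbove
        (fun k => (-1:ℝ)^(k:ℕ) * f (Fin.removeNth k (Fin.insertNth (α := fun _ => V) j v σ))) j]
      rw [Fin.removeNth_insertNth]
      refine congrArg _ (Finset.sum_congr rfl fun m _ => ?_)
      rw [removeNth_insertNth_succAbove]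
    have inner : ∀ j : Fin (n+2),
        (-1:ℝ)^(j:ℕ) * ∑ v, w v * seqCoboundary V (n+1) f (j.insertNth v σ) =
          f σ + ∑ m : Fin (n+1),
            -((-1:ℝ)^((m.predAbove j : ℕ)+(m:ℕ)) * G (m.predAbove j) m) := by
      intro j
      calc (-1:ℝ)^(j:ℕ) * ∑ v, w v * seqCoboundary V (n+1) f (j.insertNth v σ)
          = (-1:ℝ)^(j:ℕ) * ∑ v, (w v * ((-1:ℝ)^(j:ℕ) * f σ) +
              ∑ m : Fin (n+1), w v * ((-1:ℝ)^((j.succAbove m : ℕ)) *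
                f (Fin.insertNth (m.predAbove j) v (Fin.removeNth m σ)))) := by
            refine congrArg _ (Finset.sum_congr rfl fun v _ => ?_)
            rw [step j v, mul_add, Finset.mul_sum]
        _ = (-1:ℝ)^(j:ℕ) * ((∑ v, w v) * ((-1:ℝ)^(j:ℕ) * f σ) +
              ∑ m : Fin (n+1), (-1:ℝ)^((j.succAbove m : ℕ)) *
                ∑ v, w v * f (Fin.insertNth (m.predAbove j) v (Fin.removeNth m σ))) := by
            rw [Finset.sum_add_distrib, ← Finset.sum_mul, Finset.sum_comm]
            refine congrArg _ (congrArg _ (Finset.sum_congr rfl fun m _ => ?_))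
            rw [Finset.mul_sum]
            refine Finset.sum_congr rfl fun v _ => ?_
            ring
        _ = f σ + ∑ m : Fin (n+1),
              -((-1:ℝ)^((m.predAbove j : ℕ)+(m:ℕ)) * G (m.predAbove j) m) := by
            rw [hw_sum, one_mul, mul_add, Finset.mul_sum, ← mul_assoc, ← pow_add]
            have h1 : (-1:ℝ)^((j:ℕ)+(j:ℕ)) = 1 := by
              rw [← two_mul, pow_mul]; norm_num
            rw [h1, one_mul]
            refine congrArg _ (Finset.sum_congr rfl fun m _ => ?_)
            rw [← mul_assoc, hsign j m, hGdef]
            ring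
    calc ∑ j : Fin (n+2), (-1:ℝ)^(j:ℕ) * ∑ v, w v *
            seqCoboundary V (n+1) f (j.insertNth v σ)
        = ∑ j : Fin (n+2), (f σ + ∑ m : Fin (n+1),
            -((-1:ℝ)^((m.predAbove j : ℕ)+(m:ℕ)) * G (m.predAbove j) m)) :=
          Finset.sum_congr rfl fun j _ => inner j
      _ = (∑ _j : Fin (n+2), f σ) + ∑ j : Fin (n+2), ∑ m : Fin (n+1),
            -((-1:ℝ)^((m.predAbove j : ℕ)+(m:ℕ)) * G (m.predAbove j) m) :=
          Finset.sum_add_distrib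
      _ = ((n:ℝ) + 2) * f σ -
            ∑ m : Fin (n+1), (((-1:ℝ)^((m:ℕ)+(m:ℕ)) * G m m) +
              ∑ p : Fin (n+1), (-1:ℝ)^((p:ℕ)+(m:ℕ)) * G p m) := by
          rw [Finset.sum_const, Finset.card_univ, Fintype.card_fin, Finset.sum_comm]
          have hm : ∀ m : Fin (n+1),
              (∑ j : Fin (n+2),
                -((-1:ℝ)^((m.predAbove j : ℕ)+(m:ℕ)) * G (m.predAbove j) m)) =
              -((((-1:ℝ)^((m:ℕ)+(m:ℕ)) * G m m) +
                ∑ p : Fin (n+1), (-1:ℝ)^((p:ℕ)+(m:ℕ)) * G p m)) := by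
            intro m
            rw [sum_predAbove m (fun p => -((-1:ℝ)^((p:ℕ)+(m:ℕ)) * G p m))]
            rw [neg_add]
            refine congrArg₂ _ rfl ?_
            rw [← Finset.sum_neg_distrib]
          rw [Finset.sum_congr rfl fun m _ => hm m, Finset.sum_neg_distrib,
            nsmul_eq_mul]
          push_cast
          ring
  -- the "down-up" term
  have hB : seqCoboundary V n (seqCoboundaryAdj w n f) σ =
      ∑ m : Fin (n+1), ∑ p : Fin (n+1), (-1:ℝ)^((p:ℕ)+(m:ℕ)) * G p m := by
    rw [seqCoboundary_apply]
    refine Finset.sum_congr rfl fun m _ => ?_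
    rw [seqCoboundaryAdj_apply w hw n, Finset.mul_sum]
    refine Finset.sum_congr rfl fun p _ => ?_
    rw [pow_add, hGdef]
    ring
  have hL : seqLaplacian w n f σ =
      seqCoboundaryAdj w (n+1) (seqCoboundary V (n+1) f) σ +
      seqCoboundary V n (seqCoboundaryAdj w n f) σ := rfl
  rw [hL, hA, hB]
  have hGd : ∀ m : Fin (n+1), G m m = ∑ v, w v * f (Function.update σ m v) := by
    intro m
    rw [hGdef]
    refine Finset.sum_congr rfl fun v _ => ?_
    rw [Fin.insertNth_removeNth]
  have h1 : ∀ m : Fin (n+1), (-1:ℝ)^((m:ℕ)+(m:ℕ)) = 1 := by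
    intro m; rw [← two_mul, pow_mul]; norm_num
  rw [Finset.sum_add_distrib]
  have : ∑ m : Fin (n+1), (-1:ℝ)^((m:ℕ)+(m:ℕ)) * G m m =
      ∑ m : Fin (n+1), ∑ v, w v * f (Function.update σ m v) := by
    refine Finset.sum_congr rfl fun m _ => ?_
    rw [h1 m, one_mul, hGd m]
  rw [this]
  ring

end Seq14

/-- Fix a vertex `a`, a position `i ∈ {0,...,n}` and a vertex `x ≠ a`.
The cochain `Σ_{σ : σ_i = a} w_x · e_σ − Σ_{τ : τ_i = x} w_a · e_τ` is an eigenvector of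
the independent-vertices-model Hodge Laplacian `L_n` on the full sequence complex with
eigenvalue `2`. -/
theorem seqLaplacian_eigenvalue_two {V : Type*} [Fintype V] [DecidableEq V]
    (w : V → ℝ) (hw_pos : ∀ v, 0 < w v) (hw_sum : ∑ v, w v = 1) (n : ℕ)
    (a x : V) (hx : x ≠ a) (i : Fin (n + 1)) :
    seqLaplacian w n
        (fun τ => (if τ i = a then w x else 0) - (if τ i = x then w a else 0)) =
      (2 : ℝ) • fun τ => (if τ i = a then w x else 0) - (if τ i = x then w a else 0) := by
  funext σ
  have happ : seqLaplacian w n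
      (fun τ => (if τ i = a then w x else 0) - (if τ i = x then w a else 0)) σ =
      ((n:ℝ) + 2) * ((if σ i = a then w x else 0) - (if σ i = x then w a else 0)) -
        ∑ m : Fin (n+1), ∑ v, w v *
          ((if Function.update σ m v i = a then w x else 0) -
           (if Function.update σ m v i = x then w a else 0)) :=
    Seq14.seqLaplacian_apply w hw_pos hw_sum n _ σ
  have key : ∀ m : Fin (n+1), (∑ v, w v *
      ((if Function.update σ m v i = a then w x else 0) -
       (if Function.update σ m v i = x then w a else 0))) =
      if m = i then 0 else
        ((if σ i = a then w x else 0) - (if σ i = x then w a else 0)) := by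
    intro m
    by_cases hmi : m = i
    · subst hmi
      rw [if_pos rfl]
      calc ∑ v, w v * ((if Function.update σ m v m = a then w x else 0) -
              (if Function.update σ m v m = x then w a else 0))
          = ∑ v, ((if v = a then w v * w x else 0) - (if v = x then w v * w a else 0)) := by
            refine Finset.sum_congr rfl fun v _ => ?_
            rw [Function.update_self]
            split_ifs <;> ring
        _ = 0 := by
            rw [Finset.sum_sub_distrib,
              Finset.sum_ite_eq' Finset.univ a (fun v => w v * w x),
              Finset.sum_ite_eq' Finset.univ x (fun v => w v * w a)]
            simp only [Finset.mem_univ, if_true]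
            ring
    · rw [if_neg hmi]
      calc ∑ v, w v * ((if Function.update σ m v i = a then w x else 0) -
              (if Function.update σ m v i = x then w a else 0))
          = ∑ v, w v * ((if σ i = a then w x else 0) - (if σ i = x then w a else 0)) := by
            refine Finset.sum_congr rfl fun v _ => ?_
            rw [Function.update_of_ne (Ne.symm hmi)]
        _ = (if σ i = a then w x else 0) - (if σ i = x then w a else 0) := by
            rw [← Finset.sum_mul, hw_sum, one_mul]
  have hsum2 : ∑ m : Fin (n+1), (if m = i then (0:ℝ) else
      ((if σ i = a then w x else 0) - (if σ i = x then w a else 0))) =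
      (n:ℝ) * ((if σ i = a then w x else 0) - (if σ i = x then w a else 0)) := by
    calc ∑ m : Fin (n+1), (if m = i then (0:ℝ) else
          ((if σ i = a then w x else 0) - (if σ i = x then w a else 0)))
        = ∑ m : Fin (n+1),
            (((if σ i = a then w x else 0) - (if σ i = x then w a else 0)) -
              (if m = i then ((if σ i = a then w x else 0) - (if σ i = x then w a else 0))
               else 0)) := by
          refine Finset.sum_congr rfl fun m _ => by split_ifs <;> ring
      _ = (n:ℝ) * ((if σ i = a then w x else 0) - (if σ i = x then w a else 0)) := by
          rw [Finset.sum_sub_distrib, Finset.sum_const,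
            Finset.sum_ite_eq' Finset.univ i
              (fun _ => (if σ i = a then w x else 0) - (if σ i = x then w a else 0))]
          simp only [Finset.mem_univ, if_true, Finset.card_univ, Fintype.card_fin,
            nsmul_eq_mul]
          push_cast
          ring
  rw [happ, Finset.sum_congr rfl fun m _ => key m, hsum2]
  simp only [Pi.smul_apply, smul_eq_mul]
  ring
end

section
/- Fix a vertex a ∈ V and define f_0(x) ∈ C^0 by f_0(a) = Σ_y e_y and, for x ≠ a, f_0(x) = w_x e_a − w_a e_x; for η ∈ X_n set f(η) = f_0(η_0) ⊗ ... ⊗ f_0(η_n) (tensor product of cochains). Then the family {f(η) : η ∈ X_n} is a basis of C^n(X). -/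
/-- With a fixed vertex `a`: `f_0(a) = Σ_y e_y` (the constant-one cochain) and, for
`x ≠ a`, `f_0(x) = w_x e_a − w_a e_x`, written as a function of the evaluation
vertex `y`. -/
noncomputable def f0 {V : Type*} [DecidableEq V] (w : V → ℝ) (a : V) (x y : V) : ℝ :=
  if x = a then 1 else (if y = a then w x else 0) - (if y = x then w a else 0)

/-- The tensor cochain `f(η) = f_0(η_0) ⊗ ⋯ ⊗ f_0(η_n)`, whose value on a sequence `σ`
is `∏_i f_0(η_i)(σ_i)`. -/
noncomputable def tensorCochain {V : Type*} [DecidableEq V] (w : V → ℝ) (a : V) {n : ℕ}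
    (η : Fin (n + 1) → V) : (Fin (n + 1) → V) → ℝ :=
  fun σ => ∏ i, f0 w a (η i) (σ i)

/-- Explicit inverse of the matrix `f0`. -/
noncomputable def g0 {V : Type*} [DecidableEq V] (w : V → ℝ) (a : V) (y z : V) : ℝ :=
  (if z = a then 1 else 1 / w a) * w y - (if y = z then 1 else 0) / w a
    + (if y = a then 1 else 0) * (if z = a then 1 else 0) / w a

lemma f0_mul_g0 {V : Type*} [Fintype V] [DecidableEq V] (w : V → ℝ)
    (hw_pos : ∀ v, 0 < w v) (hw_sum : ∑ v, w v = 1) (a : V) :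
    (Matrix.of (f0 w a)) * (Matrix.of (g0 w a)) = 1 := by
  have ha : w a ≠ 0 := (hw_pos a).ne'
  ext x z
  rw [Matrix.mul_apply, Matrix.one_apply]
  by_cases hx : x = a
  · simp only [Matrix.of_apply, f0, if_pos hx, one_mul, g0]
    rw [Finset.sum_add_distrib, Finset.sum_sub_distrib, ← Finset.mul_sum, hw_sum,
      ← Finset.sum_div, ← Finset.sum_div, ← Finset.sum_mul, Finset.sum_ite_eq' Finset.univ z,
      Finset.sum_ite_eq' Finset.univ a]
    simp only [Finset.mem_univ, if_true, mul_one, one_mul]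
    by_cases hz : z = a
    · simp [hx, hz]
    · simp only [if_neg hz, if_neg (show x ≠ z from hx ▸ Ne.symm hz)]
      field_simp
      ring
  · simp only [Matrix.of_apply, f0, if_neg hx, sub_mul, ite_mul, zero_mul,
      Finset.sum_sub_distrib, Finset.sum_ite_eq' Finset.univ a,
      Finset.sum_ite_eq' Finset.univ x, Finset.mem_univ, if_true, g0]
    by_cases hz : z = a
    · have hxz : x ≠ z := hz ▸ hx
      simp only [if_pos hz, if_neg hxz, if_neg hx, if_neg (Ne.symm hxz), hz]
      field_simp
      simp only [↓reduceIte]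
      ring
    · by_cases hxz : x = z
      · simp only [if_neg hz, if_pos hxz, if_pos rfl, if_neg (Ne.symm hz), if_neg hx, hxz]
        field_simp
        simp only [↓reduceIte]
        ring
      · simp only [if_neg hz, if_neg hxz, if_neg (Ne.symm hz), if_neg hx,
          if_neg (Ne.symm hxz)]
        field_simp
        ring

/-- For the full sequence complex over a finite vertex set `V` with
positive vertex weights summing to `1`, and a fixed vertex `a`, the family
`{f(η) : η ∈ X_n}` of tensor cochains is a basis of `C^n(X)`: it is linearly
independent and spans the space of `n`-cochains. -/
theorem tensorCochain_basis {V : Type*} [Fintype V] [DecidableEq V]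
    (w : V → ℝ) (hw_pos : ∀ v, 0 < w v) (hw_sum : ∑ v, w v = 1) (a : V) (n : ℕ) :
    LinearIndependent ℝ (fun η : Fin (n + 1) → V => tensorCochain w a η) ∧
      Submodule.span ℝ (Set.range (fun η : Fin (n + 1) → V => tensorCochain w a η)) =
        (⊤ : Submodule ℝ ((Fin (n + 1) → V) → ℝ)) := by
  classical
  set M : Matrix (Fin (n + 1) → V) (Fin (n + 1) → V) ℝ :=
    Matrix.of fun η σ => tensorCochain w a η σ with hMdef
  set N : Matrix (Fin (n + 1) → V) (Fin (n + 1) → V) ℝ :=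
    Matrix.of fun σ η => ∏ i, g0 w a (σ i) (η i) with hNdef
  have h1 : ∀ x z : V, ∑ y, f0 w a x y * g0 w a y z = if x = z then 1 else 0 := by
    intro x z
    calc ∑ y, f0 w a x y * g0 w a y z
        = (Matrix.of (f0 w a) * Matrix.of (g0 w a)) x z := by rw [Matrix.mul_apply]; rfl
      _ = (1 : Matrix V V ℝ) x z := by rw [f0_mul_g0 w hw_pos hw_sum a]
      _ = if x = z then 1 else 0 := Matrix.one_apply
  have hMN : M * N = 1 := by
    ext η η'
    rw [Matrix.mul_apply, Matrix.one_apply]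
    have hprod : ∀ σ : Fin (n + 1) → V,
        M η σ * N σ η' = ∏ i, (f0 w a (η i) (σ i) * g0 w a (σ i) (η' i)) := by
      intro σ
      show tensorCochain w a η σ * ∏ i, g0 w a (σ i) (η' i) = _
      rw [tensorCochain, ← Finset.prod_mul_distrib]
    simp_rw [hprod]
    rw [← Fintype.prod_sum fun i y => f0 w a (η i) y * g0 w a y (η' i)]
    simp_rw [h1]
    by_cases h : η = η'
    · simp [h]
    · rw [if_neg h]
      obtain ⟨i, hi⟩ := Function.ne_iff.1 h
      exact Finset.prod_eq_zero (Finset.mem_univ i) (if_neg hi)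
  have hInv : Invertible M := invertibleOfRightInverse M N hMN
  have hM : IsUnit M := isUnit_of_invertible M
  constructor
  · exact Matrix.linearIndependent_rows_iff_isUnit.mpr hM
  · have hrange : Set.range (fun η : Fin (n + 1) → V => tensorCochain w a η)
        = Set.range M.row := rfl
    rw [hrange, ← range_vecMulLinear, LinearMap.range_eq_top]
    exact fun v => (Matrix.vecMul_surjective_iff_isUnit.mpr hM) v
end
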